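/- For all ν > 1/2, the Turán-type inequality Γ(ν+3/2)² > (2/π) Γ(ν+1) Γ(ν+2) holds; equivalently Γ(ν+3/2)/Γ(ν+2) > √(2/(π(ν+1))) for all ν > -1/2. -/

import Mathlib

/-!
Write `B(a, b) = ∫₀¹ tᵃ⁻¹ (1 - t)ᵇ⁻¹ dt = Γ(a) Γ(b) / Γ(a + b)`. With `x = ν + 1` the inequality
reads `2 B(x, 1/2) < π B(x + 1/2, 1/2)`, i.e. `0 < ∫₀¹ t^(x - 1/2) w(t) dt` for the weight
`w(t) = (π √t - 2) / √(t (1 - t))`. Since `B(1, 1/2) = 2` and `B(1/2, 1/2) = π`, the weight has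
integral `0`, and it changes sign once, at `t = (2/π)²`, from negative to positive. Against such a
weight every strictly increasing function, here `t^(x - 1/2)`, has positive integral.
-/

open Real MeasureTheory Set intervalIntegral ProbabilityTheory
open scoped Interval

theorem integral_mul_pos_of_sign_change {f g : ℝ → ℝ} {a b c : ℝ} (hac : a < c) (hcb : c < b)
    (hf : IntervalIntegrable f volume a b) (hf0 : ∫ x in a..b, f x = 0)
    (hneg : ∀ x ∈ Ioc a c, f x ≤ 0) (hpos : ∀ x ∈ Ioo c b, 0 < f x)
    (hg : ContinuousOn g (Icc a b)) (hg_mono : StrictMonoOn g (Icc a b)) :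
    0 < ∫ x in a..b, g x * f x := by
  have hab : a ≤ b := (hac.trans hcb).le
  have hc : c ∈ Icc a b := ⟨hac.le, hcb.le⟩
  have hgf : IntervalIntegrable (fun x => g x * f x) volume a b :=
    hf.continuousOn_mul (uIcc_of_le hab ▸ hg)
  have hshift : ∫ x in a..b, g x * f x = ∫ x in a..b, (g x - g c) * f x := by
    simp only [sub_mul]
    rw [integral_sub hgf (hf.const_mul (g c)), intervalIntegral.integral_const_mul, hf0,
      mul_zero, sub_zero]
  have hh : IntervalIntegrable (fun x => (g x - g c) * f x) volume a b := by
    simpa only [sub_mul] using hgf.sub (hf.const_mul (g c))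
  have hh_left : IntervalIntegrable (fun x => (g x - g c) * f x) volume a c :=
    hh.mono_set (by rw [uIcc_of_le hac.le, uIcc_of_le hab]; exact Icc_subset_Icc le_rfl hcb.le)
  have hh_right : IntervalIntegrable (fun x => (g x - g c) * f x) volume c b :=
    hh.mono_set (by rw [uIcc_of_le hcb.le, uIcc_of_le hab]; exact Icc_subset_Icc hac.le le_rfl)
  have hleft : 0 ≤ ∫ x in a..c, (g x - g c) * f x := by
    rw [integral_of_le hac.le]
    refine setIntegral_nonneg measurableSet_Ioc fun x hx => ?_
    have hx' : x ∈ Icc a b := ⟨hx.1.le, hx.2.trans hcb.le⟩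
    exact mul_nonneg_of_nonpos_of_nonpos (sub_nonpos.2 ((hg_mono.le_iff_le hx' hc).2 hx.2))
      (hneg x hx)
  have hright : 0 < ∫ x in c..b, (g x - g c) * f x := by
    refine intervalIntegral_pos_of_pos_on hh_right (fun x hx => ?_) hcb
    exact mul_pos (sub_pos.2 (hg_mono hc ⟨hac.le.trans hx.1.le, hx.2.le⟩ hx.1)) (hpos x hx)
  rw [hshift, ← integral_add_adjacent_intervals hh_left hh_right]
  linarith

lemma ofReal_rpow_mul_one_sub_rpow {x : ℝ} (hx : x ∈ Icc (0 : ℝ) 1) (a b : ℝ) :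
    ((x ^ (a - 1) * (1 - x) ^ (b - 1) : ℝ) : ℂ) =
      (x : ℂ) ^ ((a : ℂ) - 1) * (1 - (x : ℂ)) ^ ((b : ℂ) - 1) := by
  push_cast
  rw [Complex.ofReal_cpow hx.1, Complex.ofReal_cpow (sub_nonneg.2 hx.2)]
  push_cast
  rfl

lemma intervalIntegrable_rpow_mul_one_sub_rpow {a b : ℝ} (ha : 0 < a) (hb : 0 < b) :
    IntervalIntegrable (fun x : ℝ => x ^ (a - 1) * (1 - x) ^ (b - 1)) volume 0 1 := by
  refine (Complex.betaIntegral_convergent (u := a) (v := b) (by simpa) (by simpa)).norm.congr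
    fun x hx => ?_
  have hx : x ∈ Icc (0 : ℝ) 1 := uIoc_subset_uIcc.trans (uIcc_of_le zero_le_one).subset hx
  simp only [← ofReal_rpow_mul_one_sub_rpow hx, Complex.norm_real, Real.norm_eq_abs]
  exact abs_of_nonneg (mul_nonneg (rpow_nonneg hx.1 _) (rpow_nonneg (sub_nonneg.2 hx.2) _))

lemma integral_rpow_mul_one_sub_rpow {a b : ℝ} (ha : 0 < a) (hb : 0 < b) :
    ∫ x in (0 : ℝ)..1, x ^ (a - 1) * (1 - x) ^ (b - 1) = beta a b := by
  have h := Complex.betaIntegral_eq_Gamma_mul_div a b (by simpa) (by simpa)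
  rw [Complex.betaIntegral, ← integral_congr fun x hx =>
    ofReal_rpow_mul_one_sub_rpow ((uIcc_of_le (zero_le_one' ℝ)) ▸ hx) a b,
    intervalIntegral.integral_ofReal, ← Complex.ofReal_add, Complex.Gamma_ofReal,
    Complex.Gamma_ofReal, Complex.Gamma_ofReal] at h
  rw [beta]
  exact_mod_cast h

lemma beta_one_half : beta 1 (1 / 2) = 2 := by
  have hs : √π ≠ 0 := (sqrt_pos.2 pi_pos).ne'
  rw [beta, Gamma_one, add_comm, Gamma_add_one one_half_pos.ne', Gamma_one_half_eq]
  field_simp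

lemma beta_half_half : beta (1 / 2) (1 / 2) = π := by
  rw [beta, add_halves, Gamma_one, Gamma_one_half_eq, mul_self_sqrt pi_pos.le, div_one]

noncomputable def turanWeight (t : ℝ) : ℝ :=
  (π * √t - 2) * (t ^ (-(1 / 2) : ℝ) * (1 - t) ^ (-(1 / 2) : ℝ))

lemma rpow_mul_turanWeight (a : ℝ) {t : ℝ} (ht : 0 < t) :
    t ^ (a - 1 / 2) * turanWeight t =
      π * (t ^ (a + 1 / 2 - 1) * (1 - t) ^ ((1 / 2 : ℝ) - 1))
        - 2 * (t ^ (a - 1) * (1 - t) ^ ((1 / 2 : ℝ) - 1)) := by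
  have h1 : t ^ (a + 1 / 2 - 1) = t ^ (a - 1 / 2) * √t * t ^ (-(1 / 2) : ℝ) := by
    rw [sqrt_eq_rpow, ← rpow_add ht, ← rpow_add ht]; ring_nf
  have h2 : t ^ (a - 1) = t ^ (a - 1 / 2) * t ^ (-(1 / 2) : ℝ) := by
    rw [← rpow_add ht]; ring_nf
  rw [turanWeight, h1, h2, show (1 / 2 : ℝ) - 1 = -(1 / 2) by norm_num]
  ring

lemma eqOn_rpow_mul_turanWeight (a : ℝ) :
    EqOn (fun t => t ^ (a - 1 / 2) * turanWeight t)
      (fun t => π * (t ^ (a + 1 / 2 - 1) * (1 - t) ^ ((1 / 2 : ℝ) - 1))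
        - 2 * (t ^ (a - 1) * (1 - t) ^ ((1 / 2 : ℝ) - 1))) (Ι 0 1) :=
  fun _ ht => rpow_mul_turanWeight a (uIoc_of_le (zero_le_one' ℝ) ▸ ht).1

lemma intervalIntegrable_rpow_mul_turanWeight {a : ℝ} (ha : 0 < a) :
    IntervalIntegrable (fun t => t ^ (a - 1 / 2) * turanWeight t) volume 0 1 :=
  (((intervalIntegrable_rpow_mul_one_sub_rpow (by linarith) one_half_pos).const_mul π).sub
    ((intervalIntegrable_rpow_mul_one_sub_rpow ha one_half_pos).const_mul 2)).congr
    (eqOn_rpow_mul_turanWeight a).symm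

lemma integral_rpow_mul_turanWeight {a : ℝ} (ha : 0 < a) :
    ∫ t in (0 : ℝ)..1, t ^ (a - 1 / 2) * turanWeight t =
      π * beta (a + 1 / 2) (1 / 2) - 2 * beta a (1 / 2) := by
  rw [integral_congr_ae (Filter.Eventually.of_forall (eqOn_rpow_mul_turanWeight a)),
    integral_sub ((intervalIntegrable_rpow_mul_one_sub_rpow (by linarith) one_half_pos).const_mul π)
      ((intervalIntegrable_rpow_mul_one_sub_rpow ha one_half_pos).const_mul 2),
    intervalIntegral.integral_const_mul, intervalIntegral.integral_const_mul,
    integral_rpow_mul_one_sub_rpow (by linarith) one_half_pos,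
    integral_rpow_mul_one_sub_rpow ha one_half_pos]

lemma intervalIntegrable_turanWeight : IntervalIntegrable turanWeight volume 0 1 := by
  simpa only [sub_self, rpow_zero, one_mul] using
    intervalIntegrable_rpow_mul_turanWeight one_half_pos

lemma integral_turanWeight : ∫ t in (0 : ℝ)..1, turanWeight t = 0 := by
  have h := integral_rpow_mul_turanWeight one_half_pos
  simp only [sub_self, rpow_zero, one_mul, add_halves, beta_one_half, beta_half_half] at h
  rw [h]
  ring

lemma two_div_pi_sq_lt_one : (2 / π) ^ 2 < 1 := by
  rw [div_pow, div_lt_one (by positivity)]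
  nlinarith [pi_gt_three]

lemma turanWeight_nonpos {t : ℝ} (ht : t ∈ Ioc 0 ((2 / π) ^ 2)) : turanWeight t ≤ 0 := by
  have hsqrt : √t ≤ 2 / π := (sqrt_le_left (by positivity)).2 ht.2
  have hπ : π * √t ≤ 2 := by rwa [le_div_iff₀ pi_pos, mul_comm] at hsqrt
  have ht1 : 0 ≤ 1 - t := sub_nonneg.2 (ht.2.trans two_div_pi_sq_lt_one.le)
  exact mul_nonpos_of_nonpos_of_nonneg (by linarith)
    (mul_nonneg (rpow_nonneg ht.1.le _) (rpow_nonneg ht1 _))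

lemma turanWeight_pos {t : ℝ} (ht : t ∈ Ioo ((2 / π) ^ 2) 1) : 0 < turanWeight t := by
  have hsqrt : 2 / π < √t := (lt_sqrt (by positivity)).2 ht.1
  have hπ : 2 < π * √t := by rwa [div_lt_iff₀ pi_pos, mul_comm] at hsqrt
  have ht0 : 0 < t := lt_of_le_of_lt (by positivity) ht.1
  have ht1 : 0 < 1 - t := sub_pos.2 ht.2
  exact mul_pos (by linarith) (by positivity)

theorem two_mul_beta_lt_pi_mul_beta {a : ℝ} (ha : 1 / 2 < a) :
    2 * beta a (1 / 2) < π * beta (a + 1 / 2) (1 / 2) := by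
  have hexp : 0 < a - 1 / 2 := by linarith
  have h := integral_mul_pos_of_sign_change (by positivity) two_div_pi_sq_lt_one
    intervalIntegrable_turanWeight
    integral_turanWeight (fun t => turanWeight_nonpos) (fun t => turanWeight_pos)
    (continuous_rpow_const hexp.le).continuousOn
    ((strictMonoOn_rpow_Ici_of_exponent_pos hexp).mono Icc_subset_Ici_self)
  rw [integral_rpow_mul_turanWeight (by linarith)] at h
  linarith

theorem two_mul_Gamma_mul_Gamma_add_one_lt {x : ℝ} (hx : 1 / 2 < x) :
    2 * (Gamma x * Gamma (x + 1)) < π * Gamma (x + 1 / 2) ^ 2 := by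
  have h := two_mul_beta_lt_pi_mul_beta hx
  rw [beta, beta, add_assoc, add_halves, Gamma_one_half_eq, mul_div_assoc', mul_div_assoc',
    div_lt_div_iff₀ (Gamma_pos_of_pos (by linarith)) (Gamma_pos_of_pos (by linarith))] at h
  refine lt_of_mul_lt_mul_right ?_ (sqrt_nonneg π)
  linarith

theorem sqrt_two_div_pi_mul_lt_Gamma_div_Gamma {x : ℝ} (hx : 1 / 2 < x) :
    √(2 / (π * x)) < Gamma (x + 1 / 2) / Gamma (x + 1) := by
  have hx0 : 0 < x := by linarith
  rw [sqrt_lt' (div_pos (Gamma_pos_of_pos (by linarith)) (Gamma_pos_of_pos (by linarith))),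
    div_pow, div_lt_div_iff₀ (by positivity) (pow_pos (Gamma_pos_of_pos (by linarith)) 2)]
  calc 2 * Gamma (x + 1) ^ 2 = x * (2 * (Gamma x * Gamma (x + 1))) := by
        rw [Gamma_add_one hx0.ne']; ring
    _ < x * (π * Gamma (x + 1 / 2) ^ 2) :=
        mul_lt_mul_of_pos_left (two_mul_Gamma_mul_Gamma_add_one_lt hx) hx0
    _ = Gamma (x + 1 / 2) ^ 2 * (π * x) := by ring

theorem gamma_turan_ineq :
    (∀ ν : ℝ, 1 / 2 < ν →
      2 / Real.pi * (Real.Gamma (ν + 1) * Real.Gamma (ν + 2)) < Real.Gamma (ν + 3 / 2) ^ 2) ∧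
    (∀ ν : ℝ, -1 / 2 < ν →
      Real.sqrt (2 / (Real.pi * (ν + 1))) < Real.Gamma (ν + 3 / 2) / Real.Gamma (ν + 2)) := by
  have hshift : ∀ ν : ℝ, ν + 1 + 1 = ν + 2 ∧ ν + 1 + 1 / 2 = ν + 3 / 2 :=
    fun ν => ⟨by ring, by ring⟩
  constructor
  · intro ν hν
    have h := two_mul_Gamma_mul_Gamma_add_one_lt (x := ν + 1) (by linarith)
    rw [(hshift ν).1, (hshift ν).2] at h
    rw [div_mul_eq_mul_div, div_lt_iff₀ pi_pos]
    linarith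
  · intro ν hν
    have h := sqrt_two_div_pi_mul_lt_Gamma_div_Gamma (x := ν + 1) (by linarith)
    rwa [(hshift ν).1, (hshift ν).2] at h
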